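/- arXiv:2208.13886 — 9 statements merged into one kernel-verified Lean document; each statement's English description precedes it below -/
import Mathlib

section
/- Let F : X → ℝ be a continuous submodular function on a compact rectangle X = ∏_{i=1}^n [ℓ_i, u_i]. Then for all x, y ∈ X, F(y) ≤ F(x) + Σ_{t=1}^n ρ_t([y_t − x_t]^+ | x) − Σ_{t=1}^n ρ_t([x_t − y_t]^+ | (x ⊔ y) − [x_t − y_t]^+ e_t), where x ⊔ y denotes the componentwise maximum and e_t the t-th standard basis vector. -/
/-- Lemma: first-order overestimator for continuous submodular functions.
For a continuous submodular function `F` on the compact rectangle `X = Icc ℓ u`,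
for all `x, y ∈ X`,
`F y ≤ F x + ∑ t ρ_t([y_t − x_t]⁺ | x) − ∑ t ρ_t([x_t − y_t]⁺ | (x ⊔ y) − [x_t − y_t]⁺ e_t)`,
where `ρ_t(δ | z) = F (z + δ e_t) − F z`. -/
theorem stmt_0 {n : ℕ} (hn : 1 ≤ n) (ℓ u : Fin n → ℝ) (hlu : ∀ i, ℓ i < u i)
    (F : (Fin n → ℝ) → ℝ) (hcont : ContinuousOn F (Set.Icc ℓ u))
    (hsub : ∀ x ∈ Set.Icc ℓ u, ∀ y ∈ Set.Icc ℓ u, F (x ⊔ y) + F (x ⊓ y) ≤ F x + F y)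
    (x y : Fin n → ℝ) (hx : x ∈ Set.Icc ℓ u) (hy : y ∈ Set.Icc ℓ u) :
    F y ≤ F x
      + (∑ t : Fin n, (F (x + Pi.single t (max (y t - x t) 0)) - F x))
      - (∑ t : Fin n, (F (x ⊔ y) - F ((x ⊔ y) - Pi.single t (max (x t - y t) 0)))) := by
  classical
  set z : Fin n → ℝ := x ⊔ y with hzdef
  have hzi : ∀ i, z i = max (x i) (y i) := fun i => rfl
  have hxz : ∀ i, x i ≤ z i := fun i => le_max_left _ _
  have hyz : ∀ i, y i ≤ z i := fun i => le_max_right _ _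
  have hmem : ∀ w : Fin n → ℝ, (∀ i, w i = x i ∨ w i = y i ∨ w i = z i) → w ∈ Set.Icc ℓ u := by
    intro w hw
    constructor
    · intro i; rcases hw i with h|h|h <;> rw [h]
      · exact hx.1 i
      · exact hy.1 i
      · exact le_trans (hx.1 i) (hxz i)
    · intro i; rcases hw i with h|h|h <;> rw [h]
      · exact hx.2 i
      · exact hy.2 i
      · rw [hzi]; exact max_le (hx.2 i) (hy.2 i)
  have hsingle1 : ∀ t : Fin n, x + Pi.single t (max (y t - x t) 0)
      = fun i => if i = t then z i else x i := by
    intro t; funext i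
    by_cases h : i = t
    · subst h
      simp only [Pi.add_apply, Pi.single_eq_same, eq_self_iff_true, if_true, hzi]
      rcases le_total (x i) (y i) with h'|h'
      · rw [max_eq_left (sub_nonneg.mpr h'), max_eq_right h']; ring
      · rw [max_eq_right (sub_nonpos.mpr h'), max_eq_left h']; ring
    · simp [Pi.single_eq_of_ne h, h]
  have hsingle2 : ∀ t : Fin n, z - Pi.single t (max (x t - y t) 0)
      = fun i => if i = t then y i else z i := by
    intro t; funext i
    by_cases h : i = t
    · subst h
      simp only [Pi.sub_apply, Pi.single_eq_same, eq_self_iff_true, if_true, hzi]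
      rcases le_total (x i) (y i) with h'|h'
      · rw [max_eq_right (sub_nonpos.mpr h'), max_eq_right h']; ring
      · rw [max_eq_left (sub_nonneg.mpr h'), max_eq_left h']; ring
    · simp [Pi.single_eq_of_ne h, h]
  -- Step 1: raising coordinates from x to z
  have lem1 : ∀ S : Finset (Fin n),
      F (fun i => if i ∈ S then z i else x i)
        ≤ F x + ∑ t ∈ S, (F (x + Pi.single t (max (y t - x t) 0)) - F x) := by
    intro S
    induction S using Finset.induction_on with
    | empty => simp
    | @insert t S ht ih =>
      rw [Finset.sum_insert ht]
      set a : Fin n → ℝ := fun i => if i = t then z i else x i with ha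
      set b : Fin n → ℝ := fun i => if i ∈ S then z i else x i with hb
      have hamem : a ∈ Set.Icc ℓ u := by
        apply hmem; intro i; by_cases h : i = t <;> simp [ha, h]
      have hbmem : b ∈ Set.Icc ℓ u := by
        apply hmem; intro i; by_cases h : i ∈ S <;> simp [hb, h]
      have hsup : a ⊔ b = fun i => if i ∈ insert t S then z i else x i := by
        funext i
        simp only [Pi.sup_apply, ha, hb, Finset.mem_insert]
        by_cases h : i = t
        · subst h
          simp only [if_pos rfl, if_neg ht, true_or, if_pos]
          exact sup_eq_left.mpr (hxz i)
        · by_cases h' : i ∈ S <;> simp [h, h']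
          · exact hxz i
      have hinf : a ⊓ b = x := by
        funext i
        simp only [Pi.inf_apply, ha, hb]
        by_cases h : i = t
        · subst h
          simp only [if_pos rfl, if_neg ht]
          exact inf_eq_right.mpr (hxz i)
        · by_cases h' : i ∈ S <;> simp [h, h']
          exact hxz i
      have := hsub a hamem b hbmem
      rw [hsup, hinf] at this
      rw [hsingle1 t]
      linarith
  -- Step 2: lowering coordinates from z to y
  have lem2 : ∀ S : Finset (Fin n),
      F (fun i => if i ∈ S then y i else z i)
        ≤ F z - ∑ t ∈ S, (F z - F (z - Pi.single t (max (x t - y t) 0))) := by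
    intro S
    induction S using Finset.induction_on with
    | empty => simp
    | @insert t S ht ih =>
      rw [Finset.sum_insert ht]
      set a : Fin n → ℝ := fun i => if i = t then y i else z i with ha
      set b : Fin n → ℝ := fun i => if i ∈ S then y i else z i with hb
      have hamem : a ∈ Set.Icc ℓ u := by
        apply hmem; intro i; by_cases h : i = t <;> simp [ha, h]
      have hbmem : b ∈ Set.Icc ℓ u := by
        apply hmem; intro i; by_cases h : i ∈ S <;> simp [hb, h]
      have hsup : a ⊔ b = z := by
        funext i
        simp only [Pi.sup_apply, ha, hb]
        by_cases h : i = t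
        · subst h
          simp only [if_pos rfl, if_neg ht]
          exact sup_eq_right.mpr (hyz i)
        · by_cases h' : i ∈ S <;> simp [h, h']
          exact hyz i
      have hinf : a ⊓ b = fun i => if i ∈ insert t S then y i else z i := by
        funext i
        simp only [Pi.inf_apply, ha, hb, Finset.mem_insert]
        by_cases h : i = t
        · subst h
          simp only [if_pos rfl, if_neg ht, true_or, if_pos]
          exact inf_eq_left.mpr (hyz i)
        · by_cases h' : i ∈ S <;> simp [h, h']
          · exact hyz i
      have := hsub a hamem b hbmem
      rw [hsup, hinf] at this
      rw [hsingle2 t]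
      linarith
  have h1 := lem1 Finset.univ
  have h2 := lem2 Finset.univ
  simp only [Finset.mem_univ, if_true] at h1 h2
  linarith
end

section
/- Let F : X → ℝ be a submodular function on a compact rectangle X = ∏_{i=1}^n [ℓ_i, u_i]. Then for all x, y ∈ X, setting z = [y − x]^+ (componentwise), one has F(x ⊔ y) − F(x) ≤ Σ_{t=1}^n ρ_t(z_t | x), where x ⊔ y is the componentwise maximum. -/
/-- For a submodular function `F` on the compact rectangle `X = Icc ℓ u`,
for all `x, y ∈ X`, with `z = [y − x]⁺` componentwise,
`F (x ⊔ y) − F x ≤ ∑ t ρ_t(z_t | x)`, where `ρ_t(δ | w) = F (w + δ e_t) − F w`. -/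
theorem stmt_1 {n : ℕ} (hn : 1 ≤ n) (ℓ u : Fin n → ℝ) (hlu : ∀ i, ℓ i < u i)
    (F : (Fin n → ℝ) → ℝ)
    (hsub : ∀ x ∈ Set.Icc ℓ u, ∀ y ∈ Set.Icc ℓ u, F (x ⊔ y) + F (x ⊓ y) ≤ F x + F y)
    (x y : Fin n → ℝ) (hx : x ∈ Set.Icc ℓ u) (hy : y ∈ Set.Icc ℓ u)
    (z : Fin n → ℝ) (hz : ∀ t, z t = max (y t - x t) 0) :
    F (x ⊔ y) - F x ≤ ∑ t : Fin n, (F (x + Pi.single t (z t)) - F x) := by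
  have hz0 : ∀ t, 0 ≤ z t := fun t => (hz t) ▸ le_max_right _ _
  have hxz : ∀ t, x t + z t = max (x t) (y t) := by
    intro t; rw [hz t]
    rcases le_total (y t) (x t) with h | h
    · rw [max_eq_left h, max_eq_right (by linarith), add_zero]
    · rw [max_eq_right h, max_eq_left (by linarith)]; ring
  set v : ℕ → (Fin n → ℝ) := fun k i => if (i : ℕ) < k then x i + z i else x i with hv
  have hv0 : v 0 = x := by funext i; simp [hv]
  have hvn : v n = x ⊔ y := by
    funext i; simp only [hv, i.isLt, if_true]
    rw [hxz]; rfl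
  have hvmem : ∀ k, v k ∈ Set.Icc ℓ u := by
    intro k
    constructor <;> intro i <;> simp only [hv]
    · split
      · have := hx.1 i; have := hz0 i; linarith [hx.1 i, hz0 i]
      · exact hx.1 i
    · split
      · rw [hxz]; exact max_le (hx.2 i) (hy.2 i)
      · exact hx.2 i
  have hsmem : ∀ t : Fin n, x + Pi.single t (z t) ∈ Set.Icc ℓ u := by
    intro t
    constructor <;> intro i <;> simp only [Pi.add_apply, Pi.single_apply]
    · split
      · rename_i h; subst h; linarith [hx.1 i, hz0 i]
      · simpa using hx.1 i
    · split
      · rename_i h; subst h; rw [hxz]; exact max_le (hx.2 i) (hy.2 i)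
      · simpa using hx.2 i
  have key : ∀ k (hk : k < n), F (v (k+1)) - F (v k) ≤
      F (x + Pi.single (⟨k, hk⟩ : Fin n) (z ⟨k, hk⟩)) - F x := by
    intro k hk
    set t : Fin n := ⟨k, hk⟩ with ht
    have hsup : (x + Pi.single t (z t)) ⊔ v k = v (k+1) := by
      funext i
      rcases eq_or_ne i t with h | h
      · subst h
        simp only [Pi.sup_apply, Pi.add_apply]
        have e1 : v k t = x t := if_neg (by simp [ht])
        have e2 : v (k+1) t = x t + z t := if_pos (by simp [ht])
        rw [Pi.single_eq_same, e1, e2]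
        exact max_eq_left (by linarith [hz0 t])
      · have hit : (i : ℕ) ≠ k := fun hc => h (Fin.ext hc)
        simp only [Pi.sup_apply, Pi.add_apply, Pi.single_apply, hv]
        rw [if_neg h, add_zero]
        rcases Nat.lt_or_ge (i : ℕ) k with h2 | h2
        · rw [if_pos h2, if_pos (by omega)]
          exact max_eq_right (by linarith [hz0 i])
        · rw [if_neg (by omega), if_neg (by omega), max_self]
    have hinf : (x + Pi.single t (z t)) ⊓ v k = x := by
      funext i
      rcases eq_or_ne i t with h | h
      · subst h
        simp only [Pi.inf_apply, Pi.add_apply]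
        have e1 : v k t = x t := if_neg (by simp [ht])
        rw [Pi.single_eq_same, e1]
        exact min_eq_right (by linarith [hz0 t])
      · have hit : (i : ℕ) ≠ k := fun hc => h (Fin.ext hc)
        simp only [Pi.inf_apply, Pi.add_apply, Pi.single_apply, hv]
        rw [if_neg h, add_zero]
        rcases Nat.lt_or_ge (i : ℕ) k with h2 | h2
        · rw [if_pos h2]; exact min_eq_left (by linarith [hz0 i])
        · rw [if_neg (by omega), min_self]
    have := hsub _ (hsmem t) _ (hvmem k)
    rw [hsup, hinf] at this
    linarith
  calc F (x ⊔ y) - F x = ∑ k ∈ Finset.range n, (F (v (k+1)) - F (v k)) := by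
        rw [Finset.sum_range_sub (fun k => F (v k)), hv0, hvn]
    _ ≤ ∑ k ∈ Finset.range n, (if h : k < n then
          F (x + Pi.single (⟨k, h⟩ : Fin n) (z ⟨k, h⟩)) - F x else 0) := by
        apply Finset.sum_le_sum
        intro k hk
        have hk' := Finset.mem_range.mp hk
        rw [dif_pos hk']
        exact key k hk'
    _ = ∑ t : Fin n, (F (x + Pi.single t (z t)) - F x) := by
        rw [← Fin.sum_univ_eq_sum_range]
        apply Finset.sum_congr rfl
        intro t _
        rw [dif_pos t.isLt]
end

section
/- Let F : X → ℝ be a submodular function on a compact rectangle X = ∏_{i=1}^n [ℓ_i, u_i]. Then for all x, y ∈ X, setting w = [x − y]^+ (componentwise), one has F(x ⊔ y) − F(y) ≥ Σ_{t=1}^n ρ_t(w_t | (x ⊔ y) − w_t e_t), where x ⊔ y is the componentwise maximum and e_t the t-th standard basis vector. -/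
/-!
Walk from `x ⊔ y` down to `y` one coordinate at a time. The marginal loss of lowering
coordinate `t` of the *top* point `x ⊔ y` to `y t` is at most the loss of the same move
made from the `t`-th point of the walk, which already agrees with `y` below `t`: that point
and the updated top point have `x ⊔ y` as join and the next point of the walk as meet, so
this is submodularity. The losses along the walk telescope to `F (x ⊔ y) - F y`.
-/

open Function

def SubmodularOn {α β : Type*} [Lattice α] [Add β] [LE β] (s : Set α) (F : α → β) : Prop :=
  ∀ x ∈ s, ∀ y ∈ s, F (x ⊔ y) + F (x ⊓ y) ≤ F x + F y

theorem SubmodularOn.mono {α β : Type*} [Lattice α] [Add β] [LE β] {s t : Set α} {F : α → β}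
    (hF : SubmodularOn t F) (hst : s ⊆ t) : SubmodularOn s F :=
  fun x hx y hy => hF x (hst hx) y (hst hy)

section Staircase

variable {α : Type*} {n : ℕ}

def staircase (y z : Fin n → α) (k : ℕ) : Fin n → α :=
  fun i => if (i : ℕ) < k then y i else z i

@[simp]
theorem staircase_zero (y z : Fin n → α) : staircase y z 0 = z :=
  funext fun _ => if_neg (Nat.not_lt_zero _)

@[simp]
theorem staircase_self_length (y z : Fin n → α) : staircase y z n = y :=
  funext fun i => if_pos i.isLt

theorem staircase_mem_Icc [Preorder α] {y z : Fin n → α} (hyz : y ≤ z) (k : ℕ) :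
    staircase y z k ∈ Set.Icc y z := by
  constructor <;> intro i <;> by_cases h : (i : ℕ) < k <;> simp [staircase, h, hyz i]

variable [Lattice α]

theorem update_sup_staircase {y z : Fin n → α} (hyz : y ≤ z) (t : Fin n) :
    update z t (y t) ⊔ staircase y z t = z := by
  funext i
  by_cases h : i = t
  · subst h
    simp [staircase, hyz i]
  · by_cases hi : (i : ℕ) < t <;> simp [staircase, h, hi, hyz i]

theorem update_inf_staircase {y z : Fin n → α} (hyz : y ≤ z) (t : Fin n) :
    update z t (y t) ⊓ staircase y z t = staircase y z (t + 1) := by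
  funext i
  by_cases h : i = t
  · subst h
    simp [staircase, hyz i]
  · have hne : (i : ℕ) ≠ t := Fin.val_ne_of_ne h
    rcases lt_or_gt_of_ne hne with hi | hi
    · simp [staircase, h, hi, hi.trans (Nat.lt_succ_self _), hyz i]
    · simp [staircase, h, hi.not_gt, (Nat.succ_le_of_lt hi).not_gt]

end Staircase

section Marginals

variable {α β : Type*} [Lattice α] [AddCommGroup β] [PartialOrder β] [IsOrderedAddMonoid β]
  {n : ℕ} {F : (Fin n → α) → β} {y z : Fin n → α}

theorem SubmodularOn.sub_update_le_sub_staircase (hF : SubmodularOn (Set.Icc y z) F)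
    (hyz : y ≤ z) (t : Fin n) :
    F z - F (update z t (y t)) ≤ F (staircase y z t) - F (staircase y z (t + 1)) := by
  have hupdate : update z t (y t) ∈ Set.Icc y z :=
    ⟨le_update_iff.2 ⟨le_rfl, fun i _ => hyz i⟩, update_le_iff.2 ⟨hyz t, fun _ _ => le_rfl⟩⟩
  have h := hF _ hupdate _ (staircase_mem_Icc hyz t)
  rw [update_sup_staircase hyz, update_inf_staircase hyz] at h
  rw [sub_le_sub_iff, add_comm (F (staircase y z t))]
  exact h

theorem SubmodularOn.sum_sub_update_le (hF : SubmodularOn (Set.Icc y z) F) (hyz : y ≤ z) :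
    ∑ t : Fin n, (F z - F (update z t (y t))) ≤ F z - F y :=
  calc ∑ t : Fin n, (F z - F (update z t (y t)))
      ≤ ∑ t : Fin n, (F (staircase y z t) - F (staircase y z (t + 1))) :=
        Finset.sum_le_sum fun t _ => hF.sub_update_le_sub_staircase hyz t
    _ = F z - F y := by
      rw [Fin.sum_univ_eq_sum_range (fun k => F (staircase y z k) - F (staircase y z (k + 1))),
        Finset.sum_range_sub', staircase_zero, staircase_self_length]

end Marginals

theorem sup_sub_single_max_sub_zero {ι G : Type*} [DecidableEq ι] [AddCommGroup G]
    [LinearOrder G] [IsOrderedAddMonoid G] (x y : ι → G) (t : ι) :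
    x ⊔ y - Pi.single t (max (x t - y t) 0) = update (x ⊔ y) t (y t) := by
  funext i
  by_cases h : i = t
  · subst h
    have hpos : max (x i - y i) 0 = max (x i) (y i) - y i := by
      rw [← sub_self (y i), max_sub_sub_right]
    simp [hpos]
  · simp [h]

theorem stmt_2_general {n : ℕ} (ℓ u : Fin n → ℝ)
    (F : (Fin n → ℝ) → ℝ)
    (hsub : ∀ x ∈ Set.Icc ℓ u, ∀ y ∈ Set.Icc ℓ u, F (x ⊔ y) + F (x ⊓ y) ≤ F x + F y)
    (x y : Fin n → ℝ) (hx : x ∈ Set.Icc ℓ u) (hy : y ∈ Set.Icc ℓ u)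
    (w : Fin n → ℝ) (hw : ∀ t, w t = max (x t - y t) 0) :
    ∑ t : Fin n, (F (x ⊔ y) - F ((x ⊔ y) - Pi.single t (w t))) ≤ F (x ⊔ y) - F y := by
  have hF : SubmodularOn (Set.Icc y (x ⊔ y)) F :=
    SubmodularOn.mono hsub (Set.Icc_subset_Icc hy.1 (sup_le hx.2 hy.2))
  simp only [hw, sup_sub_single_max_sub_zero]
  exact hF.sum_sub_update_le le_sup_right

/-- For a submodular function `F` on the compact rectangle `X = Icc ℓ u`,
for all `x, y ∈ X`, with `w = [x − y]⁺` componentwise,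
`F (x ⊔ y) − F y ≥ ∑ t ρ_t(w_t | (x ⊔ y) − w_t e_t)`,
where `ρ_t(δ | v) = F (v + δ e_t) − F v`. -/
theorem stmt_2 {n : ℕ} (hn : 1 ≤ n) (ℓ u : Fin n → ℝ) (hlu : ∀ i, ℓ i < u i)
    (F : (Fin n → ℝ) → ℝ)
    (hsub : ∀ x ∈ Set.Icc ℓ u, ∀ y ∈ Set.Icc ℓ u, F (x ⊔ y) + F (x ⊓ y) ≤ F x + F y)
    (x y : Fin n → ℝ) (hx : x ∈ Set.Icc ℓ u) (hy : y ∈ Set.Icc ℓ u)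
    (w : Fin n → ℝ) (hw : ∀ t, w t = max (x t - y t) 0) :
    ∑ t : Fin n, (F (x ⊔ y) - F ((x ⊔ y) - Pi.single t (w t))) ≤ F (x ⊔ y) - F y :=
  stmt_2_general ℓ u F hsub x y hx hy w hw
end

section
/- Let F : X → ℝ be a non-decreasing submodular function on a compact rectangle X = ∏_{i=1}^n [ℓ_i, u_i]. Then for all x, x̂ ∈ X, F(x) ≤ F(x̂) + Σ_{t=1}^n ρ_t([x_t − x̂_t]^+ | x̂). -/
/-- Proposition: first-order overestimator, non-decreasing case.
For a non-decreasing submodular function `F` on the compact rectangle `X = Icc ℓ u`,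
for all `x, x̂ ∈ X`, `F x ≤ F x̂ + ∑ t ρ_t([x_t − x̂_t]⁺ | x̂)`,
where `ρ_t(δ | z) = F (z + δ e_t) − F z`.  (`xh` plays the role of `x̂`.) -/
theorem stmt_3 {n : ℕ} (hn : 1 ≤ n) (ℓ u : Fin n → ℝ) (hlu : ∀ i, ℓ i < u i)
    (F : (Fin n → ℝ) → ℝ)
    (hsub : ∀ x ∈ Set.Icc ℓ u, ∀ y ∈ Set.Icc ℓ u, F (x ⊔ y) + F (x ⊓ y) ≤ F x + F y)
    (hmono : ∀ x ∈ Set.Icc ℓ u, ∀ y ∈ Set.Icc ℓ u, x ≤ y → F x ≤ F y)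
    (x xh : Fin n → ℝ) (hx : x ∈ Set.Icc ℓ u) (hxh : xh ∈ Set.Icc ℓ u) :
    F x ≤ F xh + ∑ t : Fin n, (F (xh + Pi.single t (max (x t - xh t) 0)) - F xh) := by
  classical
  set y : ℕ → Fin n → ℝ := fun k i => if (i : ℕ) < k then max (x i) (xh i) else xh i with hy
  set v : Fin n → Fin n → ℝ := fun t => xh + Pi.single t (max (x t - xh t) 0) with hv
  have hvval : ∀ t i, v t i = if i = t then max (x i) (xh i) else xh i := by
    intro t i
    simp only [hv, Pi.add_apply, Pi.single_apply]
    by_cases h : i = t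
    · subst h
      simp only [if_pos rfl]
      rcases le_total (x i) (xh i) with h | h
      · simp [max_eq_right (sub_nonpos.mpr h), max_eq_right h]
      · simp [max_eq_left (sub_nonneg.mpr h), max_eq_left h]
    · simp [h]
  have hyIcc : ∀ k, y k ∈ Set.Icc ℓ u := by
    intro k
    constructor <;> intro i <;> simp only [hy] <;> split
    · exact le_trans (hxh.1 i) (le_max_right _ _)
    · exact hxh.1 i
    · exact max_le (hx.2 i) (hxh.2 i)
    · exact hxh.2 i
  have hvIcc : ∀ t, v t ∈ Set.Icc ℓ u := by
    intro t
    constructor <;> intro i <;> rw [hvval t i] <;> split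
    · exact le_trans (hxh.1 i) (le_max_right _ _)
    · exact hxh.1 i
    · exact max_le (hx.2 i) (hxh.2 i)
    · exact hxh.2 i
  have step : ∀ k : Fin n, F (y ((k : ℕ) + 1)) + F xh ≤ F (y k) + F (v k) := by
    intro k
    have hsup : y k ⊔ v k = y ((k : ℕ) + 1) := by
      funext i
      simp only [Pi.sup_apply, hy, hvval]
      rcases lt_trichotomy (i : ℕ) (k : ℕ) with h | h | h
      · have hik : i ≠ k := fun e => absurd (congrArg Fin.val e) (Nat.ne_of_lt h)
        simp [h, hik, Nat.lt_succ_of_lt h, le_max_right]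
      · have hik : i = k := Fin.ext h
        simp [hik, Nat.lt_succ_self, max_comm (x k) (xh k)]
      · have hik : i ≠ k := fun e => absurd (congrArg Fin.val e) (Nat.ne_of_gt h)
        have h1 : ¬ (i : ℕ) < (k : ℕ) := not_lt_of_gt h
        have h2 : ¬ (i : ℕ) < (k : ℕ) + 1 := by omega
        simp [h1, h2, hik]
    have hinf : y k ⊓ v k = xh := by
      funext i
      simp only [Pi.inf_apply, hy, hvval]
      by_cases hik : i = k
      · subst hik
        simp [lt_irrefl, min_comm]
      · by_cases h : (i : ℕ) < (k : ℕ)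
        · simp [h, hik, min_comm]
        · simp [h, hik]
    have := hsub (y k) (hyIcc k) (v k) (hvIcc k)
    rw [hsup, hinf] at this
    exact this
  have main : ∀ k, k ≤ n → F (y k) ≤ F xh +
      ∑ t ∈ Finset.univ.filter (fun t : Fin n => (t : ℕ) < k), (F (v t) - F xh) := by
    intro k
    induction k with
    | zero =>
      intro _
      have : y 0 = xh := by funext i; simp [hy]
      simp [this]
    | succ k ih =>
      intro hk
      have hk' : k < n := hk
      have ihk := ih (le_of_lt hk')
      set kf : Fin n := ⟨k, hk'⟩ with hkf
      have hfilter : Finset.univ.filter (fun t : Fin n => (t : ℕ) < k + 1)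
          = insert kf (Finset.univ.filter (fun t : Fin n => (t : ℕ) < k)) := by
        ext t
        simp only [Finset.mem_filter, Finset.mem_insert, Finset.mem_univ, true_and]
        constructor
        · intro h
          rcases Nat.lt_succ_iff_lt_or_eq.mp h with h | h
          · exact Or.inr h
          · exact Or.inl (Fin.ext h)
        · rintro (h | h)
          · subst h; exact Nat.lt_succ_self k
          · exact Nat.lt_succ_of_lt h
      have hnotmem : kf ∉ Finset.univ.filter (fun t : Fin n => (t : ℕ) < k) := by
        simp [hkf]
      rw [hfilter, Finset.sum_insert hnotmem]
      have hstep := step kf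
      have : F (y (k + 1)) ≤ F (y k) + (F (v kf) - F xh) := by linarith
      calc F (y (k + 1)) ≤ F (y k) + (F (v kf) - F xh) := this
        _ ≤ F xh + ∑ t ∈ Finset.univ.filter (fun t : Fin n => (t : ℕ) < k), (F (v t) - F xh)
            + (F (v kf) - F xh) := by linarith
        _ = F xh + ((F (v kf) - F xh) +
            ∑ t ∈ Finset.univ.filter (fun t : Fin n => (t : ℕ) < k), (F (v t) - F xh)) := by ring
  have hfin := main n le_rfl
  have hfull : Finset.univ.filter (fun t : Fin n => (t : ℕ) < n) = Finset.univ := by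
    ext t; simp [t.isLt]
  rw [hfull] at hfin
  have hxy : x ≤ y n := by
    intro i
    simp only [hy, i.isLt, if_true]
    exact le_max_left _ _
  exact le_trans (hmono x hx (y n) (hyIcc n) hxy) hfin
end

section
/- Let F : X → ℝ be a non-decreasing, differentiable, DR-submodular function on a compact rectangle X = ∏_{i=1}^n [ℓ_i, u_i]. Then for all x, x̂ ∈ X, F(x) ≤ F̃(x; x̂) := F(x̂) + Σ_{i=1}^n (∂F/∂x_i)(x̂) · [x_i − x̂_i]^+. -/
/-!
Let `m = x ⊔ x̂`. Monotonicity gives `F x ≤ F m`. Raising the coordinates of `x̂` to those of `m`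
one at a time, submodularity bounds each increment by the increment obtained when that coordinate
alone is raised from `x̂`, so `F m - F x̂ ≤ ∑ i, (F (x̂ + (m i - x̂ i) eᵢ) - F x̂)`. Concavity along
the `i`-th coordinate line bounds the `i`-th term by its tangent `∂ᵢF(x̂) · [xᵢ - x̂ᵢ]⁺`.
-/

open Finset Function

lemma update_add_eq_add_single {ι M : Type*} [DecidableEq ι] [AddZeroClass M] (x : ι → M)
    (i : ι) (t : M) : update x i (x i + t) = x + Pi.single i t := by
  ext j
  by_cases hji : j = i
  · subst hji
    simp
  · simp [hji]

section Submodular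

variable {ι α : Type*} [DecidableEq ι] [Lattice α] {a b : ι → α}

lemma piecewise_sup_update (hab : a ≤ b) (s : Finset ι) (i : ι) :
    s.piecewise b a ⊔ update a i (b i) = (insert i s).piecewise b a := by
  ext j
  by_cases hji : j = i
  · subst hji
    simpa using (piecewise_mem_Icc' s hab).2 j
  · by_cases hjs : j ∈ s <;> simp [hji, hjs, hab j]

lemma piecewise_inf_update (hab : a ≤ b) {s : Finset ι} {i : ι} (hi : i ∉ s) :
    s.piecewise b a ⊓ update a i (b i) = a := by
  ext j
  by_cases hji : j = i
  · subst hji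
    simp [hi, hab j]
  · by_cases hjs : j ∈ s <;> simp [hji, hjs, hab j]

theorem sub_le_sum_update_sub_of_submodular [Fintype ι] {F : (ι → α) → ℝ} (hab : a ≤ b)
    (hsub : ∀ x ∈ Set.Icc a b, ∀ y ∈ Set.Icc a b, F (x ⊔ y) + F (x ⊓ y) ≤ F x + F y) :
    F b - F a ≤ ∑ i, (F (update a i (b i)) - F a) := by
  suffices h : ∀ s : Finset ι,
      F (s.piecewise b a) - F a ≤ ∑ i ∈ s, (F (update a i (b i)) - F a) by
    simpa using h univ
  intro s
  induction s using Finset.induction_on with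
  | empty => simp
  | insert i s hi ih =>
    have hi_mem : update a i (b i) ∈ Set.Icc a b := by
      simpa only [piecewise_singleton] using piecewise_mem_Icc' {i} hab
    have := hsub _ (piecewise_mem_Icc' s hab) _ hi_mem
    rw [piecewise_sup_update hab, piecewise_inf_update hab hi] at this
    rw [sum_insert hi]
    linarith

end Submodular

lemma ConcaveOn.le_add_mul_sub_of_hasDerivAt {S : Set ℝ} {g : ℝ → ℝ} {g' a b : ℝ}
    (hg : ConcaveOn ℝ S g) (ha : a ∈ S) (hb : b ∈ S) (hab : a ≤ b) (hg' : HasDerivAt g g' a) :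
    g b ≤ g a + g' * (b - a) := by
  rcases hab.eq_or_lt with rfl | hlt
  · simp
  · have := hg.slope_le_of_hasDerivAt ha hb hlt hg'
    rw [slope_def_field, div_le_iff₀ (sub_pos.2 hlt)] at this
    linarith

section Partial

variable {ι : Type*} [Fintype ι] [DecidableEq ι] {F : (ι → ℝ) → ℝ} {x : ι → ℝ}

lemma DifferentiableAt.hasDerivAt_add_single (hF : DifferentiableAt ℝ F x) (i : ι) :
    HasDerivAt (fun t => F (x + Pi.single i t)) (fderiv ℝ F x (Pi.single i 1)) 0 := by
  simpa [HasLineDerivAt, ← Pi.single_smul'] using hF.hasFDerivAt.hasLineDerivAt (Pi.single i 1)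

lemma le_add_fderiv_single_mul_of_concaveOn {S : Set (ι → ℝ)} (hx : x ∈ S)
    (hF : DifferentiableAt ℝ F x) {i : ι}
    (hconc : ConcaveOn ℝ {t | x + Pi.single i t ∈ S} fun t => F (x + Pi.single i t))
    {t : ℝ} (ht : 0 ≤ t) (hxt : x + Pi.single i t ∈ S) :
    F (x + Pi.single i t) ≤ F x + fderiv ℝ F x (Pi.single i 1) * t := by
  simpa using hconc.le_add_mul_sub_of_hasDerivAt (a := 0) (by simpa using hx) hxt ht
    (hF.hasDerivAt_add_single i)

end Partial

theorem stmt_4_general {n : ℕ} (ℓ u : Fin n → ℝ)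
    (F : (Fin n → ℝ) → ℝ) (hdiff : Differentiable ℝ F)
    (hsub : ∀ x ∈ Set.Icc ℓ u, ∀ y ∈ Set.Icc ℓ u, F (x ⊔ y) + F (x ⊓ y) ≤ F x + F y)
    (hconc : ∀ (i : Fin n), ∀ x ∈ Set.Icc ℓ u,
      ConcaveOn ℝ {t : ℝ | x + Pi.single i t ∈ Set.Icc ℓ u}
        (fun t : ℝ => F (x + Pi.single i t)))
    (hmono : ∀ x ∈ Set.Icc ℓ u, ∀ y ∈ Set.Icc ℓ u, x ≤ y → F x ≤ F y)
    (x xh : Fin n → ℝ) (hx : x ∈ Set.Icc ℓ u) (hxh : xh ∈ Set.Icc ℓ u) :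
    F x ≤ F xh + ∑ i : Fin n, fderiv ℝ F xh (Pi.single i 1) * max (x i - xh i) 0 := by
  set m := x ⊔ xh
  have hIcc : Set.Icc xh m ⊆ Set.Icc ℓ u := Set.Icc_subset_Icc hxh.1 (sup_le hx.2 hxh.2)
  have hupdate (i : Fin n) : update xh i (m i) = xh + Pi.single i (max (x i - xh i) 0) := by
    rw [← update_add_eq_add_single, ← max_add_add_left, add_sub_cancel, add_zero]
    rfl
  have hstep (i : Fin n) :
      F (update xh i (m i)) - F xh ≤ fderiv ℝ F xh (Pi.single i 1) * max (x i - xh i) 0 := by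
    have hmem : update xh i (m i) ∈ Set.Icc ℓ u := by
      simpa only [piecewise_singleton] using hIcc (piecewise_mem_Icc' {i} le_sup_right)
    rw [hupdate] at hmem ⊢
    linarith [le_add_fderiv_single_mul_of_concaveOn hxh (hdiff xh) (hconc i xh hxh)
      (le_max_right _ _) hmem]
  calc F x ≤ F m := hmono x hx m (hIcc ⟨le_sup_right, le_rfl⟩) le_sup_left
    _ ≤ F xh + ∑ i, (F (update xh i (m i)) - F xh) := by
      linarith [sub_le_sum_update_sub_of_submodular le_sup_right
        fun p hp q hq => hsub p (hIcc hp) q (hIcc hq)]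
    _ ≤ _ := add_le_add_right (sum_le_sum fun i _ => hstep i) _

/-- Gradient-based first-order overestimator.
For a non-decreasing, differentiable, DR-submodular function `F` on the compact rectangle
`X = Icc ℓ u`, for all `x, x̂ ∈ X`,
`F x ≤ F̃(x; x̂) = F x̂ + ∑ i (∂F/∂x_i)(x̂) · [x_i − x̂_i]⁺`.
(`xh` plays the role of `x̂`; the partial derivative is `fderiv ℝ F xh (Pi.single i 1)`.) -/
theorem stmt_4 {n : ℕ} (hn : 1 ≤ n) (ℓ u : Fin n → ℝ) (hlu : ∀ i, ℓ i < u i)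
    (F : (Fin n → ℝ) → ℝ) (hdiff : Differentiable ℝ F)
    (hsub : ∀ x ∈ Set.Icc ℓ u, ∀ y ∈ Set.Icc ℓ u, F (x ⊔ y) + F (x ⊓ y) ≤ F x + F y)
    (hconc : ∀ (i : Fin n), ∀ x ∈ Set.Icc ℓ u,
      ConcaveOn ℝ {t : ℝ | x + Pi.single i t ∈ Set.Icc ℓ u}
        (fun t : ℝ => F (x + Pi.single i t)))
    (hmono : ∀ x ∈ Set.Icc ℓ u, ∀ y ∈ Set.Icc ℓ u, x ≤ y → F x ≤ F y)
    (x xh : Fin n → ℝ) (hx : x ∈ Set.Icc ℓ u) (hxh : xh ∈ Set.Icc ℓ u) :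
    F x ≤ F xh + ∑ i : Fin n, fderiv ℝ F xh (Pi.single i 1) * max (x i - xh i) 0 :=
  stmt_4_general ℓ u F hdiff hsub hconc hmono x xh hx hxh
end

section
/- Let F : X → ℝ be a non-decreasing, differentiable, DR-submodular function on a compact rectangle X = ∏_{i=1}^n [ℓ_i, u_i]. Then for every x ∈ X and η ∈ ℝ: η ≤ F(x) if and only if η ≤ F̃(x; x̂) for all x̂ ∈ X. In other words, the hypograph of F equals the set {(η, x) : x ∈ X, η ≤ F̃(x; x̂) ∀ x̂ ∈ X}. -/
/-!
The reverse implication is the choice `x̂ = x`. For the forward one, monotonicity gives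
`F x ≤ F (x ⊔ x̂)`, and `x ⊔ x̂` is reached from `x̂` by raising one coordinate at a time.
By submodularity each step gains at most what the same step gains when taken from `x̂` itself,
and by concavity along that coordinate this gain is at most `∂ⱼF(x̂) · [xⱼ − x̂ⱼ]⁺`.
-/

open Set

theorem Function.update_eq_self_add_single {ι M : Type*} [DecidableEq ι] [AddCommGroup M]
    (z : ι → M) (j : ι) (b : M) :
    Function.update z j b = z + Pi.single j (b - z j) := by
  ext i
  rcases eq_or_ne i j with rfl | hij <;> simp [*]

theorem ConcaveOn.le_add_mul_of_hasDerivAt {S : Set ℝ} {g : ℝ → ℝ} {x y d : ℝ}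
    (hg : ConcaveOn ℝ S g) (hx : x ∈ S) (hy : y ∈ S) (hd : HasDerivAt g d x) :
    g y ≤ g x + (y - x) * d := by
  rcases lt_trichotomy x y with hxy | rfl | hyx
  · have := hg.slope_le_of_hasDerivAt hx hy hxy hd
    rw [slope_def_field, div_le_iff₀ (sub_pos.2 hxy)] at this
    linarith
  · simp
  · have := hg.le_slope_of_hasDerivAt hy hx hyx hd
    rw [slope_def_field, le_div_iff₀ (sub_pos.2 hyx)] at this
    linarith

section

variable {ι : Type*} [DecidableEq ι]

theorem sub_le_sub_update_of_submodularOn {α : Type*} [LinearOrder α] {s : Set (ι → α)}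
    {F : (ι → α) → ℝ} (hsub : ∀ x ∈ s, ∀ y ∈ s, F (x ⊔ y) + F (x ⊓ y) ≤ F x + F y)
    {a z : ι → α} {j : ι} {b : α} (haz : a ≤ z) (hj : z j = a j) (hb : a j ≤ b)
    (hab : Function.update a j b ∈ s) (hz : z ∈ s) :
    F (Function.update z j b) - F z ≤ F (Function.update a j b) - F a := by
  have hsup : Function.update a j b ⊔ z = Function.update z j b := by
    ext i
    rcases eq_or_ne i j with rfl | hij
    · simp [hj, hb]
    · simp [hij, haz i]
  have hinf : Function.update a j b ⊓ z = a := by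
    ext i
    rcases eq_or_ne i j with rfl | hij
    · simp [hj, hb]
    · simp [hij, haz i]
  have := hsub _ hab _ hz
  rw [hsup, hinf] at this
  linarith

variable [Fintype ι] {F : (ι → ℝ) → ℝ}

theorem le_add_mul_fderiv_single {w : ι → ℝ} {j : ι} {S : Set ℝ} {t : ℝ}
    (hF : DifferentiableAt ℝ F w) (hconc : ConcaveOn ℝ S fun t => F (w + Pi.single j t))
    (h0 : 0 ∈ S) (ht : t ∈ S) :
    F (w + Pi.single j t) ≤ F w + t * fderiv ℝ F w (Pi.single j 1) := by
  have hline : HasDerivAt (fun t => w + Pi.single j t) (Pi.single j 1) 0 :=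
    (hasDerivAt_single j 0).const_add w
  have hF' : HasFDerivAt F (fderiv ℝ F w) (w + Pi.single j 0) := by
    simpa using hF.hasFDerivAt
  simpa using hconc.le_add_mul_of_hasDerivAt h0 ht (hF'.comp_hasDerivAt 0 hline)

theorem le_add_sum_fderiv_mul_sub_of_le {ℓ u a y : ι → ℝ} (hF : DifferentiableAt ℝ F a)
    (hsub : ∀ x ∈ Icc ℓ u, ∀ y ∈ Icc ℓ u, F (x ⊔ y) + F (x ⊓ y) ≤ F x + F y)
    (hconc : ∀ i, ConcaveOn ℝ {t : ℝ | a + Pi.single i t ∈ Icc ℓ u}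
      fun t => F (a + Pi.single i t))
    (ha : a ∈ Icc ℓ u) (hy : y ∈ Icc ℓ u) (hay : a ≤ y) :
    F y ≤ F a + ∑ i, fderiv ℝ F a (Pi.single i 1) * (y i - a i) := by
  suffices h : ∀ s : Finset ι,
      F (s.piecewise y a) ≤ F a + ∑ i ∈ s, fderiv ℝ F a (Pi.single i 1) * (y i - a i) by
    simpa using h Finset.univ
  intro s
  induction s using Finset.induction_on with
  | empty => simp
  | insert j s hj ih =>
    set z := s.piecewise y a
    have hzj : z j = a j := s.piecewise_eq_of_notMem _ _ hj
    have haj : Function.update a j (y j) ∈ Icc ℓ u := by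
      rw [← Finset.piecewise_singleton]
      exact Finset.piecewise_mem_Icc_of_mem_of_mem _ hy ha
    have hgain := sub_le_sub_update_of_submodularOn hsub
      (Finset.le_piecewise_of_le_of_le s hay le_rfl) hzj (hay j) haj
      (Finset.piecewise_mem_Icc_of_mem_of_mem s hy ha)
    have htangent : F (Function.update a j (y j))
        ≤ F a + (y j - a j) * fderiv ℝ F a (Pi.single j 1) := by
      rw [Function.update_eq_self_add_single] at haj ⊢
      exact le_add_mul_fderiv_single hF (hconc j) (by simpa using ha) haj
    rw [Finset.piecewise_insert, Finset.sum_insert hj]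
    linarith

end

theorem stmt_6_general {n : ℕ} (ℓ u : Fin n → ℝ)
    (F : (Fin n → ℝ) → ℝ) (hdiff : Differentiable ℝ F)
    (hsub : ∀ x ∈ Set.Icc ℓ u, ∀ y ∈ Set.Icc ℓ u, F (x ⊔ y) + F (x ⊓ y) ≤ F x + F y)
    (hconc : ∀ (i : Fin n), ∀ x ∈ Set.Icc ℓ u,
      ConcaveOn ℝ {t : ℝ | x + Pi.single i t ∈ Set.Icc ℓ u}
        (fun t : ℝ => F (x + Pi.single i t)))
    (hmono : ∀ x ∈ Set.Icc ℓ u, ∀ y ∈ Set.Icc ℓ u, x ≤ y → F x ≤ F y)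
    (x : Fin n → ℝ) (hx : x ∈ Set.Icc ℓ u) (η : ℝ) :
    η ≤ F x ↔ ∀ xh ∈ Set.Icc ℓ u,
      η ≤ F xh + ∑ i : Fin n, fderiv ℝ F xh (Pi.single i 1) * max (x i - xh i) 0 := by
  refine ⟨fun hη xh hxh => ?_, fun h => by simpa using h x hx⟩
  have hsup : x ⊔ xh ∈ Icc ℓ u := ⟨le_sup_of_le_left hx.1, sup_le hx.2 hxh.2⟩
  have hbound := le_add_sum_fderiv_mul_sub_of_le (hdiff xh) hsub (fun i => hconc i xh hxh)
    hxh hsup le_sup_right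
  simp only [Pi.sup_apply, ← max_sub_sub_right, sub_self] at hbound
  linarith [hmono x hx _ hsup le_sup_left]

/-- the gradient-based first-order overestimators form the hypograph of `F`.
For a non-decreasing, differentiable, DR-submodular function `F` on the compact rectangle
`X = Icc ℓ u`, for every `x ∈ X` and `η ∈ ℝ`:
`η ≤ F x` iff `η ≤ F̃(x; x̂) = F x̂ + ∑ i (∂F/∂x_i)(x̂) · [x_i − x̂_i]⁺` for all `x̂ ∈ X`. -/
theorem stmt_6 {n : ℕ} (hn : 1 ≤ n) (ℓ u : Fin n → ℝ) (hlu : ∀ i, ℓ i < u i)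
    (F : (Fin n → ℝ) → ℝ) (hdiff : Differentiable ℝ F)
    (hsub : ∀ x ∈ Set.Icc ℓ u, ∀ y ∈ Set.Icc ℓ u, F (x ⊔ y) + F (x ⊓ y) ≤ F x + F y)
    (hconc : ∀ (i : Fin n), ∀ x ∈ Set.Icc ℓ u,
      ConcaveOn ℝ {t : ℝ | x + Pi.single i t ∈ Set.Icc ℓ u}
        (fun t : ℝ => F (x + Pi.single i t)))
    (hmono : ∀ x ∈ Set.Icc ℓ u, ∀ y ∈ Set.Icc ℓ u, x ≤ y → F x ≤ F y)
    (x : Fin n → ℝ) (hx : x ∈ Set.Icc ℓ u) (η : ℝ) :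
    η ≤ F x ↔ ∀ xh ∈ Set.Icc ℓ u,
      η ≤ F xh + ∑ i : Fin n, fderiv ℝ F xh (Pi.single i 1) * max (x i - xh i) 0 :=
  stmt_6_general ℓ u F hdiff hsub hconc hmono x hx η
end

section
/- Let F : X → ℝ be a non-decreasing, differentiable, DR-submodular function on a compact rectangle X = ∏_{i=1}^n [ℓ_i, u_i], and let X' ⊆ X be nonempty. Then sup_{x ∈ X'} F(x) = sup { η : ∃ x ∈ X' such that η ≤ F̃(x; x̂) for all x̂ ∈ X }. Consequently, (η*, x*) with x* ∈ X' maximizes η over the set {(η, x) : x ∈ X', η ≤ F̃(x; x̂) ∀ x̂ ∈ X} if and only if x* maximizes F over X' and η* = F(x*). -/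
open Set Filter Topology

lemma concave_incr {S : Set ℝ} {g : ℝ → ℝ} (hg : ConcaveOn ℝ S g)
    {s₁ s₂ t : ℝ} (h12 : s₁ ≤ s₂) (ht : 0 ≤ t)
    (h1 : s₁ ∈ S) (h2 : s₂ ∈ S) (h1t : s₁ + t ∈ S) (h2t : s₂ + t ∈ S) :
    g (s₂ + t) + g s₁ ≤ g (s₁ + t) + g s₂ := by
  rcases eq_or_lt_of_le (show s₁ ≤ s₂ + t by linarith) with h | h
  · have ht0 : t = 0 := by linarith
    have hs : s₁ = s₂ := by linarith
    subst hs; rw [ht0, add_zero]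
  · set D := s₂ + t - s₁ with hD
    have hDpos : 0 < D := by rw [hD]; linarith
    set lam := t / D with hlam
    have hl0 : 0 ≤ lam := div_nonneg ht hDpos.le
    have hl1 : lam ≤ 1 := by rw [hlam, div_le_one hDpos]; linarith
    have hld : lam * D = t := div_mul_cancel₀ t hDpos.ne'
    have key1 := hg.2 h1 h2t (show (0:ℝ) ≤ 1 - lam by linarith) hl0 (by ring)
    have key2 := hg.2 h1 h2t hl0 (show (0:ℝ) ≤ 1 - lam by linarith) (by ring)
    rw [smul_eq_mul, smul_eq_mul, smul_eq_mul, smul_eq_mul] at key1 key2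
    have e1 : (1 - lam) * s₁ + lam * (s₂ + t) = s₁ + t := by
      have : (1 - lam) * s₁ + lam * (s₂ + t) = s₁ + lam * D := by rw [hD]; ring
      rw [this, hld]
    have e2 : lam * s₁ + (1 - lam) * (s₂ + t) = s₂ := by
      have : lam * s₁ + (1 - lam) * (s₂ + t) = s₂ + t - lam * D := by rw [hD]; ring
      rw [this, hld]; ring
    rw [e1] at key1
    rw [e2] at key2
    nlinarith [key1, key2]

lemma memIccPi {n : ℕ} {ℓ u x : Fin n → ℝ} (h : ∀ j, ℓ j ≤ x j ∧ x j ≤ u j) :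
    x ∈ Set.Icc ℓ u :=
  ⟨fun j => (h j).1, fun j => (h j).2⟩

lemma coordDR {n : ℕ} {ℓ u : Fin n → ℝ} {F : (Fin n → ℝ) → ℝ}
    (hsub : ∀ x ∈ Set.Icc ℓ u, ∀ y ∈ Set.Icc ℓ u, F (x ⊔ y) + F (x ⊓ y) ≤ F x + F y)
    (hconc : ∀ (i : Fin n), ∀ x ∈ Set.Icc ℓ u,
      ConcaveOn ℝ {t : ℝ | x + Pi.single i t ∈ Set.Icc ℓ u}
        (fun t : ℝ => F (x + Pi.single i t)))
    {a b : Fin n → ℝ} (ha : a ∈ Set.Icc ℓ u) (hb : b ∈ Set.Icc ℓ u) (hab : a ≤ b)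
    (i : Fin n) {t : ℝ} (ht : 0 ≤ t) (hbt : b + Pi.single i t ∈ Set.Icc ℓ u) :
    F (b + Pi.single i t) + F a ≤ F (a + Pi.single i t) + F b := by
  have hbtu : b i + t ≤ u i := by simpa using hbt.2 i
  set s₂ := b i - a i with hs₂def
  have hs₂ : 0 ≤ s₂ := sub_nonneg.2 (hab i)
  set a' := a + Pi.single i s₂ with ha'def
  have ha'j : ∀ j, a' j = if j = i then b i else a j := by
    intro j
    by_cases hji : j = i
    · subst hji; simp [ha'def, hs₂def]
    · simp [ha'def, Pi.single_apply, hji]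
  have ha'mem : a' ∈ Set.Icc ℓ u := by
    apply memIccPi
    intro j; rw [ha'j j]
    by_cases hji : j = i
    · subst hji; rw [if_pos rfl]; exact ⟨hb.1 j, hb.2 j⟩
    · simp only [if_neg hji]; exact ⟨ha.1 j, ha.2 j⟩
  have hSmem : ∀ s : ℝ, 0 ≤ s → a i + s ≤ u i →
      s ∈ {s : ℝ | a + Pi.single i s ∈ Set.Icc ℓ u} := by
    intro s hs0 hsu
    simp only [Set.mem_setOf_eq]
    apply memIccPi
    intro j
    by_cases hji : j = i
    · subst hji
      simp only [Pi.add_apply, Pi.single_eq_same]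
      exact ⟨le_add_of_le_of_nonneg (ha.1 j) hs0, hsu⟩
    · simp only [Pi.add_apply, Pi.single_apply, if_neg hji, add_zero]
      exact ⟨ha.1 j, ha.2 j⟩
  have hS0 : (0:ℝ) ∈ {s : ℝ | a + Pi.single i s ∈ Set.Icc ℓ u} :=
    hSmem 0 le_rfl (by linarith [ha.2 i])
  have hSs₂ : s₂ ∈ {s : ℝ | a + Pi.single i s ∈ Set.Icc ℓ u} :=
    hSmem s₂ hs₂ (by rw [hs₂def]; linarith [hb.2 i])
  have hSt : t ∈ {s : ℝ | a + Pi.single i s ∈ Set.Icc ℓ u} :=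
    hSmem t ht (by linarith [hab i])
  have hSs₂t : s₂ + t ∈ {s : ℝ | a + Pi.single i s ∈ Set.Icc ℓ u} :=
    hSmem (s₂ + t) (by linarith) (by rw [hs₂def]; linarith)
  have ineq1 := concave_incr (hconc i a ha) hs₂ ht hS0 hSs₂
    (by rwa [zero_add]) hSs₂t
  rw [zero_add] at ineq1
  have hsingle_add : Pi.single i (s₂ + t) = (Pi.single i s₂ : Fin n → ℝ) + Pi.single i t := by
    funext j
    by_cases hji : j = i
    · subst hji; simp
    · simp [Pi.single_apply, hji]
  have e1 : a + Pi.single i (s₂ + t) = a' + Pi.single i t := by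
    rw [ha'def, hsingle_add, add_assoc]
  rw [e1, Pi.single_zero, add_zero, ← ha'def] at ineq1
  -- ineq1 : F (a' + Pi.single i t) + F a ≤ F (a + Pi.single i t) + F a'
  have ha'eq : ∀ j, j = i → a' j = b i := by
    intro j hji; rw [ha'j j, if_pos hji]
  have ha'ne : ∀ j, j ≠ i → a' j = a j := by
    intro j hji; rw [ha'j j, if_neg hji]
  have ha'tmem : a' + Pi.single i t ∈ Set.Icc ℓ u := by
    apply memIccPi
    intro j
    by_cases hji : j = i
    · subst hji
      rw [Pi.add_apply, Pi.single_eq_same, ha'eq j rfl]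
      exact ⟨by linarith [hb.1 j], hbtu⟩
    · rw [Pi.add_apply, Pi.single_apply, if_neg hji, add_zero, ha'ne j hji]
      exact ⟨ha.1 j, ha.2 j⟩
  have hsup : (a' + Pi.single i t) ⊔ b = b + Pi.single i t := by
    funext j
    rw [Pi.sup_apply]
    by_cases hji : j = i
    · subst hji
      rw [Pi.add_apply, Pi.add_apply, Pi.single_eq_same, ha'eq j rfl]
      exact sup_eq_left.2 (by linarith)
    · rw [Pi.add_apply, Pi.add_apply, Pi.single_apply, if_neg hji, add_zero, add_zero,
        ha'ne j hji]
      exact sup_eq_right.2 (hab j)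
  have hinf : (a' + Pi.single i t) ⊓ b = a' := by
    funext j
    rw [Pi.inf_apply]
    by_cases hji : j = i
    · subst hji
      rw [Pi.add_apply, Pi.single_eq_same, ha'eq j rfl]
      exact inf_eq_right.2 (by linarith)
    · rw [Pi.add_apply, Pi.single_apply, if_neg hji, add_zero, ha'ne j hji]
      exact inf_eq_left.2 (hab j)
  have ineq2 := hsub (a' + Pi.single i t) ha'tmem b hb
  rw [hsup, hinf] at ineq2
  linarith

lemma multiDR {n : ℕ} {ℓ u : Fin n → ℝ} {F : (Fin n → ℝ) → ℝ}
    (hsub : ∀ x ∈ Set.Icc ℓ u, ∀ y ∈ Set.Icc ℓ u, F (x ⊔ y) + F (x ⊓ y) ≤ F x + F y)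
    (hconc : ∀ (i : Fin n), ∀ x ∈ Set.Icc ℓ u,
      ConcaveOn ℝ {t : ℝ | x + Pi.single i t ∈ Set.Icc ℓ u}
        (fun t : ℝ => F (x + Pi.single i t)))
    {a b c : Fin n → ℝ} (ha : a ∈ Set.Icc ℓ u) (hb : b ∈ Set.Icc ℓ u) (hab : a ≤ b)
    (hc : ∀ j, 0 ≤ c j) (hbc : b + c ∈ Set.Icc ℓ u) :
    F (b + c) + F a ≤ F (a + c) + F b := by
  set ck : ℕ → Fin n → ℝ := fun k j => if (j : ℕ) < k then c j else 0 with hckdef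
  have hck0 : ∀ k j, 0 ≤ ck k j := by
    intro k j; simp only [hckdef]; split <;> [exact hc j; exact le_rfl]
  have hckc : ∀ k j, ck k j ≤ c j := by
    intro k j; simp only [hckdef]; split <;> [exact le_rfl; exact hc j]
  have hmemA : ∀ k, a + ck k ∈ Set.Icc ℓ u := by
    intro k; apply memIccPi; intro j
    refine ⟨le_add_of_le_of_nonneg (ha.1 j) (hck0 k j), ?_⟩
    calc a j + ck k j ≤ b j + c j := add_le_add (hab j) (hckc k j)
      _ ≤ u j := hbc.2 j
  have hmemB : ∀ k, b + ck k ∈ Set.Icc ℓ u := by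
    intro k; apply memIccPi; intro j
    refine ⟨le_add_of_le_of_nonneg (hb.1 j) (hck0 k j), ?_⟩
    calc b j + ck k j ≤ b j + c j := add_le_add le_rfl (hckc k j)
      _ ≤ u j := hbc.2 j
  have main : ∀ k, F (b + ck k) + F a ≤ F (a + ck k) + F b := by
    intro k
    induction k with
    | zero =>
      have h0 : ck 0 = 0 := by funext j; simp [hckdef]
      rw [h0, add_zero, add_zero]; linarith
    | succ k ih =>
      by_cases hk : k < n
      · set i : Fin n := ⟨k, hk⟩ with hidef
        have hsplit : ck (k + 1) = ck k + Pi.single i (c i) := by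
          funext j
          simp only [hckdef, Pi.add_apply, Pi.single_apply]
          by_cases hji : j = i
          · have hjk : (j : ℕ) = k := by rw [hji]
            rw [if_pos (by omega), if_neg (by omega), if_pos hji, zero_add, hji]
          · have hjk : (j : ℕ) ≠ k := fun h => hji (Fin.ext h)
            rw [if_neg hji, add_zero]
            rcases Nat.lt_or_ge (j : ℕ) k with h | h
            · rw [if_pos h, if_pos (by omega)]
            · rw [if_neg (by omega), if_neg (by omega)]
        have habk : a + ck k ≤ b + ck k := add_le_add hab le_rfl
        have e : (b + ck k) + Pi.single i (c i) = b + ck (k + 1) := by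
          rw [hsplit, add_assoc]
        have e2 : (a + ck k) + Pi.single i (c i) = a + ck (k + 1) := by
          rw [hsplit, add_assoc]
        have step := coordDR hsub hconc (hmemA k) (hmemB k) habk i (hc i)
          (by rw [e]; exact hmemB (k + 1))
        rw [e, e2] at step
        linarith [ih]
      · have heq : ck (k + 1) = ck k := by
          funext j
          simp only [hckdef]
          have hj := j.isLt
          rw [if_pos (by omega), if_pos (by omega)]
        rw [heq]; exact ih
  have hcn : ck n = c := by
    funext j; simp only [hckdef]; rw [if_pos j.isLt]
  have := main n
  rwa [hcn] at this

lemma gradOver {n : ℕ} {ℓ u : Fin n → ℝ} {F : (Fin n → ℝ) → ℝ}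
    (hdiff : Differentiable ℝ F)
    (hsub : ∀ x ∈ Set.Icc ℓ u, ∀ y ∈ Set.Icc ℓ u, F (x ⊔ y) + F (x ⊓ y) ≤ F x + F y)
    (hconc : ∀ (i : Fin n), ∀ x ∈ Set.Icc ℓ u,
      ConcaveOn ℝ {t : ℝ | x + Pi.single i t ∈ Set.Icc ℓ u}
        (fun t : ℝ => F (x + Pi.single i t)))
    (hmono : ∀ x ∈ Set.Icc ℓ u, ∀ y ∈ Set.Icc ℓ u, x ≤ y → F x ≤ F y)
    {x xh : Fin n → ℝ} (hx : x ∈ Set.Icc ℓ u) (hxh : xh ∈ Set.Icc ℓ u) :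
    F x ≤ F xh + ∑ i : Fin n, fderiv ℝ F xh (Pi.single i 1) * max (x i - xh i) 0 := by
  classical
  set d : Fin n → ℝ := fun i => max (x i - xh i) 0 with hd
  have hd0 : ∀ j, 0 ≤ d j := fun j => le_max_right _ _
  have hdsum : ∀ j, xh j + d j = max (x j) (xh j) := by
    intro j
    show xh j + max (x j - xh j) 0 = max (x j) (xh j)
    rcases le_total (x j) (xh j) with h | h
    · rw [max_eq_right (sub_nonpos.2 h), max_eq_right h, add_zero]
    · rw [max_eq_left (sub_nonneg.2 h), max_eq_left h]; ring
  have hpath : ∀ s ∈ Set.Icc (0:ℝ) 1, xh + s • d ∈ Set.Icc ℓ u := by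
    intro s hs
    apply memIccPi
    intro j
    have h1 : 0 ≤ s * d j := mul_nonneg hs.1 (hd0 j)
    have h2 : s * d j ≤ d j := mul_le_of_le_one_left (hd0 j) hs.2
    refine ⟨le_add_of_le_of_nonneg (hxh.1 j) h1, ?_⟩
    have : xh j + d j ≤ u j := by rw [hdsum j]; exact max_le (hx.2 j) (hxh.2 j)
    calc xh j + (s • d) j = xh j + s * d j := rfl
      _ ≤ xh j + d j := by linarith
      _ ≤ u j := this
  set h : ℝ → ℝ := fun s => F (xh + s • d) with hhdef
  have hh : ∀ s : ℝ, HasDerivAt h (fderiv ℝ F (xh + s • d) d) s := by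
    intro s
    have h1 : HasDerivAt (fun s : ℝ => xh + s • d) d s := by
      simpa using ((hasDerivAt_id s).smul_const d).const_add xh
    exact (hdiff (xh + s • d)).hasFDerivAt.comp_hasDerivAt s h1
  have hcomp : ∀ s ∈ Set.Icc (0:ℝ) 1,
      fderiv ℝ F (xh + s • d) d ≤ fderiv ℝ F xh d := by
    intro s hs
    rcases eq_or_lt_of_le hs.1 with h0 | h0
    · rw [← h0, zero_smul, add_zero]
    · have key : ∀ t ∈ Set.Ioc (0:ℝ) s, (h s - h (s - t)) / t ≤ (h t - h 0) / t := by
        intro t ht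
        have hbmem : xh + (s - t) • d ∈ Set.Icc ℓ u :=
          hpath (s - t) ⟨by linarith [ht.2], by linarith [hs.2, ht.1]⟩
        have hab : xh ≤ xh + (s - t) • d := by
          intro j
          exact le_add_of_nonneg_right (mul_nonneg (by linarith [ht.2]) (hd0 j))
        have hc : ∀ j, 0 ≤ (t • d) j := fun j => mul_nonneg ht.1.le (hd0 j)
        have hbc : (xh + (s - t) • d) + t • d = xh + s • d := by
          rw [add_assoc, ← add_smul, sub_add_cancel]
        have hDR := multiDR hsub hconc hxh hbmem hab hc (by rw [hbc]; exact hpath s hs)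
        rw [hbc] at hDR
        -- hDR : F (xh + s • d) + F xh ≤ F (xh + t • d) + F (xh + (s - t) • d)
        have hnum : h s - h (s - t) ≤ h t - h 0 := by
          simp only [hhdef, zero_smul, add_zero]
          linarith [hDR]
        exact div_le_div_of_nonneg_right hnum ht.1.le |>.trans_eq rfl
      have hslope_s : Filter.Tendsto (fun t => (h s - h (s - t)) / t) (nhdsWithin 0 (Set.Ioi 0))
          (nhds (fderiv ℝ F (xh + s • d) d)) := by
        have hts := hasDerivAt_iff_tendsto_slope.1 (hh s)
        have hmap : Filter.Tendsto (fun t : ℝ => s - t) (nhdsWithin 0 (Set.Ioi 0))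
            (nhdsWithin s {s}ᶜ) := by
          apply tendsto_nhdsWithin_of_tendsto_nhds_of_eventually_within
          · have : Filter.Tendsto (fun t : ℝ => s - t) (nhds 0) (nhds (s - 0)) :=
              tendsto_const_nhds.sub Filter.tendsto_id
            rw [sub_zero] at this
            exact this.mono_left nhdsWithin_le_nhds
          · filter_upwards [self_mem_nhdsWithin] with t ht
            simp only [Set.mem_compl_iff, Set.mem_singleton_iff]
            intro hcontra
            have : t = 0 := by linarith
            exact absurd this (ne_of_gt ht)
        have := hts.comp hmap
        refine this.congr fun t => ?_
        show slope h s (s - t) = (h s - h (s - t)) / t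
        rw [slope_def_field]
        have : s - t - s = -t := by ring
        rw [this]
        rw [div_neg, ← neg_div, neg_sub]
      have hslope_0 : Filter.Tendsto (fun t => (h t - h 0) / t) (nhdsWithin 0 (Set.Ioi 0))
          (nhds (fderiv ℝ F xh d)) := by
        have hts := hasDerivAt_iff_tendsto_slope.1 (hh 0)
        rw [zero_smul, add_zero] at hts
        have hmono' : nhdsWithin (0:ℝ) (Set.Ioi 0) ≤ nhdsWithin 0 {(0:ℝ)}ᶜ :=
          nhdsWithin_mono 0 (fun t ht => ne_of_gt ht)
        have := hts.mono_left hmono'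
        refine this.congr fun t => ?_
        show slope h 0 t = (h t - h 0) / t
        rw [slope_def_field, sub_zero]
      refine le_of_tendsto_of_tendsto hslope_s hslope_0 ?_
      filter_upwards [Ioc_mem_nhdsGT h0] with t ht using key t ht
  set C := fderiv ℝ F xh d with hC
  have hψ : ∀ s : ℝ, HasDerivAt (fun s : ℝ => s * C - h s)
      (C - fderiv ℝ F (xh + s • d) d) s := fun s => (hasDerivAt_mul_const C).sub (hh s)
  have hψmono : MonotoneOn (fun s : ℝ => s * C - h s) (Set.Icc 0 1) := by
    apply monotoneOn_of_deriv_nonneg (convex_Icc 0 1)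
    · apply Continuous.continuousOn
      rw [continuous_iff_continuousAt]
      exact fun s => (hψ s).continuousAt
    · intro s hs
      exact ((hψ s).differentiableAt).differentiableWithinAt
    · intro s hs
      rw [(hψ s).deriv]
      have hs' : s ∈ Set.Icc (0:ℝ) 1 := by
        rw [interior_Icc] at hs
        exact ⟨hs.1.le, hs.2.le⟩
      exact sub_nonneg.2 (hcomp s hs')
  have hψ01 := hψmono (Set.mem_Icc.2 ⟨le_refl 0, zero_le_one⟩)
    (Set.mem_Icc.2 ⟨zero_le_one, le_refl 1⟩) zero_le_one
  simp only at hψ01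
  have h0eq : h 0 = F xh := by simp [hhdef]
  have h1eq : h 1 = F (xh + d) := by simp [hhdef]
  have hFx : F x ≤ F (xh + d) := by
    apply hmono x hx (xh + d) (by simpa using hpath 1 (Set.mem_Icc.2 ⟨zero_le_one, le_refl 1⟩))
    intro j
    rw [Pi.add_apply, hdsum j]
    exact le_max_left _ _
  have hCsum : C = ∑ i : Fin n, fderiv ℝ F xh (Pi.single i 1) * d i := by
    have hdrep : d = ∑ i : Fin n, d i • (Pi.single i (1:ℝ) : Fin n → ℝ) := by
      funext j
      rw [Finset.sum_apply]
      simp only [Pi.smul_apply, Pi.single_apply, smul_eq_mul, mul_ite, mul_one, mul_zero]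
      rw [Finset.sum_ite_eq Finset.univ j (fun i => d i)]
      simp
    have h1 : C = ∑ i : Fin n, d i • fderiv ℝ F xh (Pi.single i (1:ℝ)) := by
      rw [hC]
      conv_lhs => rw [hdrep]
      rw [map_sum]
      exact Finset.sum_congr rfl fun i _ => map_smul _ _ _
    rw [h1]
    exact Finset.sum_congr rfl fun i _ => by rw [smul_eq_mul, mul_comm]
  have hgoal : F x ≤ F xh + C := by
    have : 0 * C - h 0 ≤ 1 * C - h 1 := hψ01
    rw [h0eq, h1eq, zero_mul, one_mul] at this
    linarith [hFx]
  rw [hCsum] at hgoal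
  simpa only [hd] using hgoal

/-- equivalence of the hypograph-based cutting-plane formulation.
For a non-decreasing, differentiable, DR-submodular function `F` on the compact rectangle
`X = Icc ℓ u`, and a nonempty `X' ⊆ X`:
`sup_{x ∈ X'} F x = sup {η | ∃ x ∈ X', ∀ x̂ ∈ X, η ≤ F̃(x; x̂)}`, where
`F̃(x; x̂) = F x̂ + ∑ i (∂F/∂x_i)(x̂) · [x_i − x̂_i]⁺`.  Consequently, a pair `(η*, x*)`
with `x* ∈ X'` maximizes `η` over `{(η, x) | x ∈ X', η ≤ F̃(x; x̂) ∀ x̂ ∈ X}` iff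
`x*` maximizes `F` over `X'` and `η* = F x*`. -/
theorem stmt_7 {n : ℕ} (hn : 1 ≤ n) (ℓ u : Fin n → ℝ) (hlu : ∀ i, ℓ i < u i)
    (F : (Fin n → ℝ) → ℝ) (hdiff : Differentiable ℝ F)
    (hsub : ∀ x ∈ Set.Icc ℓ u, ∀ y ∈ Set.Icc ℓ u, F (x ⊔ y) + F (x ⊓ y) ≤ F x + F y)
    (hconc : ∀ (i : Fin n), ∀ x ∈ Set.Icc ℓ u,
      ConcaveOn ℝ {t : ℝ | x + Pi.single i t ∈ Set.Icc ℓ u}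
        (fun t : ℝ => F (x + Pi.single i t)))
    (hmono : ∀ x ∈ Set.Icc ℓ u, ∀ y ∈ Set.Icc ℓ u, x ≤ y → F x ≤ F y)
    (X' : Set (Fin n → ℝ)) (hX'sub : X' ⊆ Set.Icc ℓ u) (hX'ne : X'.Nonempty) :
    sSup (F '' X')
      = sSup {η : ℝ | ∃ x ∈ X', ∀ xh ∈ Set.Icc ℓ u,
          η ≤ F xh + ∑ i : Fin n, fderiv ℝ F xh (Pi.single i 1) * max (x i - xh i) 0}
    ∧ ∀ (ηstar : ℝ) (xstar : Fin n → ℝ), xstar ∈ X' →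
      (((∀ xh ∈ Set.Icc ℓ u, ηstar ≤ F xh +
            ∑ i : Fin n, fderiv ℝ F xh (Pi.single i 1) * max (xstar i - xh i) 0)
        ∧ ∀ (η : ℝ) (x : Fin n → ℝ), x ∈ X' →
            (∀ xh ∈ Set.Icc ℓ u, η ≤ F xh +
              ∑ i : Fin n, fderiv ℝ F xh (Pi.single i 1) * max (x i - xh i) 0) →
            η ≤ ηstar)
        ↔ ((∀ x ∈ X', F x ≤ F xstar) ∧ ηstar = F xstar)) := by
  have key : ∀ x ∈ Set.Icc ℓ u, ∀ xh ∈ Set.Icc ℓ u,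
      F x ≤ F xh + ∑ i : Fin n, fderiv ℝ F xh (Pi.single i 1) * max (x i - xh i) 0 :=
    fun x hx xh hxh => gradOver hdiff hsub hconc hmono hx hxh
  have self_eq : ∀ x : Fin n → ℝ,
      F x + ∑ i : Fin n, fderiv ℝ F x (Pi.single i 1) * max (x i - x i) 0 = F x := by
    intro x; simp
  have set_eq : {η : ℝ | ∃ x ∈ X', ∀ xh ∈ Set.Icc ℓ u,
        η ≤ F xh + ∑ i : Fin n, fderiv ℝ F xh (Pi.single i 1) * max (x i - xh i) 0}
      = {η : ℝ | ∃ x ∈ X', η ≤ F x} := by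
    ext η
    constructor
    · rintro ⟨x, hx, hb⟩
      refine ⟨x, hx, ?_⟩
      have := hb x (hX'sub hx)
      rwa [self_eq x] at this
    · rintro ⟨x, hx, hb⟩
      exact ⟨x, hx, fun xh hxh => hb.trans (key x (hX'sub hx) xh hxh)⟩
  constructor
  · rw [set_eq]
    have hne1 : (F '' X').Nonempty := hX'ne.image F
    have hsub12 : F '' X' ⊆ {η : ℝ | ∃ x ∈ X', η ≤ F x} := by
      rintro _ ⟨x, hx, rfl⟩; exact ⟨x, hx, le_rfl⟩
    by_cases hbdd : BddAbove (F '' X')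
    · obtain ⟨M, hM⟩ := hbdd
      have hbddT : BddAbove {η : ℝ | ∃ x ∈ X', η ≤ F x} := by
        refine ⟨M, ?_⟩
        rintro η ⟨x, hx, hle⟩
        exact hle.trans (hM ⟨x, hx, rfl⟩)
      apply le_antisymm
      · exact csSup_le_csSup hbddT hne1 hsub12
      · refine csSup_le (hne1.mono hsub12) ?_
        rintro η ⟨x, hx, hle⟩
        exact hle.trans (le_csSup ⟨M, hM⟩ ⟨x, hx, rfl⟩)
    · have hbddT : ¬ BddAbove {η : ℝ | ∃ x ∈ X', η ≤ F x} :=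
        fun hT => hbdd (hT.mono hsub12)
      rw [Real.sSup_of_not_bddAbove hbdd, Real.sSup_of_not_bddAbove hbddT]
  · intro ηstar xstar hxstar
    constructor
    · rintro ⟨hA, hB⟩
      have h1 : ηstar ≤ F xstar := by
        have := hA xstar (hX'sub hxstar)
        rwa [self_eq xstar] at this
      have hmax : ∀ x ∈ X', F x ≤ F xstar := by
        intro x hx
        exact (hB (F x) x hx (fun xh hxh => key x (hX'sub hx) xh hxh)).trans h1
      refine ⟨hmax, le_antisymm h1 ?_⟩
      exact hB (F xstar) xstar hxstar (fun xh hxh => key xstar (hX'sub hxstar) xh hxh)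
    · rintro ⟨hmax, rfl⟩
      refine ⟨fun xh hxh => key xstar (hX'sub hxstar) xh hxh, ?_⟩
      intro η x hx hb
      have hηx : η ≤ F x := by
        have := hb x (hX'sub hx)
        rwa [self_eq x] at this
      exact hηx.trans (hmax x hx)
end

section
/- Let ℓ < u be real numbers, let x̂ ∈ [ℓ, u], and let x, y ∈ ℝ. Then (ℓ ≤ x ≤ u and y = [x − x̂]^+) if and only if there exists z ∈ {0, 1} such that: y ≤ x − ℓ(1 − z) − x̂ z, y ≤ (u − x̂) z, y ≥ x − x̂, y ≥ 0, and ℓ ≤ x ≤ u. That is, the tightened big-M mixed-binary system is a valid formulation of the graph of the function x ↦ [x − x̂]^+ over [ℓ, u]. -/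
/-- ideal/valid big-M formulation of the graph of `x ↦ [x − x̂]⁺` on `[ℓ, u]`.
Let `ℓ < u`, `x̂ ∈ [ℓ, u]`, and `x, y ∈ ℝ`.  Then `(ℓ ≤ x ≤ u ∧ y = [x − x̂]⁺)` iff there is a
binary `z ∈ {0, 1}` with `y ≤ x − ℓ(1 − z) − x̂ z`, `y ≤ (u − x̂) z`, `y ≥ x − x̂`, `y ≥ 0`,
and `ℓ ≤ x ≤ u`.  (`xh` plays the role of `x̂`.) -/
theorem stmt_8 (ℓ u xh : ℝ) (hlu : ℓ < u) (hxh : xh ∈ Set.Icc ℓ u) (x y : ℝ) :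
    (ℓ ≤ x ∧ x ≤ u ∧ y = max (x - xh) 0) ↔
    ∃ z : ℝ, (z = 0 ∨ z = 1) ∧
      y ≤ x - ℓ * (1 - z) - xh * z ∧
      y ≤ (u - xh) * z ∧
      x - xh ≤ y ∧
      0 ≤ y ∧
      ℓ ≤ x ∧ x ≤ u := by
  obtain ⟨hl, hu⟩ := hxh
  constructor
  · rintro ⟨h1, h2, rfl⟩
    by_cases h : x ≤ xh
    · refine ⟨0, Or.inl rfl, ?_⟩
      rw [max_eq_right (by linarith)]
      refine ⟨by nlinarith, by nlinarith, by linarith, le_rfl, h1, h2⟩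
    · refine ⟨1, Or.inr rfl, ?_⟩
      rw [max_eq_left (by linarith)]
      refine ⟨by nlinarith, by nlinarith, le_rfl, by linarith, h1, h2⟩
  · rintro ⟨z, (rfl | rfl), c1, c2, c3, c4, c5, c6⟩
    · refine ⟨c5, c6, ?_⟩
      rw [max_eq_right (by nlinarith)]
      nlinarith
    · refine ⟨c5, c6, ?_⟩
      rw [max_eq_left (by nlinarith)]
      nlinarith
end

section
/- Let F : X → ℝ be a non-decreasing, differentiable, DR-submodular function on a compact rectangle X = ∏_{i=1}^n [ℓ_i, u_i] with ℓ_i < u_i for all i, and define F̆(x) = inf_{x̂ ∈ X} F̆(x; x̂). Then the approximate concave envelope is exact at the corners ℓ = (ℓ_1, …, ℓ_n) and u = (u_1, …, u_n): F̆(ℓ) = F(ℓ) and F̆(u) = F(u). -/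
open Set Finset

/-- Tangent-line bound from coordinatewise concavity. -/
lemma aux_tangent {n : ℕ} (ℓ u : Fin n → ℝ) (F : (Fin n → ℝ) → ℝ)
    (hdiff : Differentiable ℝ F) (i : Fin n) (xh : Fin n → ℝ)
    (hxh : xh ∈ Set.Icc ℓ u)
    (hconc : ConcaveOn ℝ {t : ℝ | xh + Pi.single i t ∈ Set.Icc ℓ u}
        (fun t : ℝ => F (xh + Pi.single i t)))
    (s : ℝ) (hs : 0 ≤ s) (hmem : xh + Pi.single i s ∈ Set.Icc ℓ u) :
    F (xh + Pi.single i s) ≤ F xh + fderiv ℝ F xh (Pi.single i 1) * s := by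
  rcases eq_or_lt_of_le hs with rfl | hs'
  · simp
  · set g : ℝ → ℝ := fun t : ℝ => F (xh + Pi.single i t) with hg
    have hgeq : ∀ t : ℝ, xh + Pi.single i t = xh + t • (Pi.single i (1:ℝ) : Fin n → ℝ) := by
      intro t
      funext j
      by_cases h : j = i
      · subst h; simp
      · simp [Pi.single_eq_of_ne h]
    have hcurve : HasDerivAt (fun t : ℝ => xh + t • (Pi.single i (1:ℝ) : Fin n → ℝ))
        (Pi.single i (1:ℝ)) 0 := by
      simpa using ((hasDerivAt_id (0:ℝ)).smul_const (Pi.single i (1:ℝ))).const_add xh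
    have hd : HasDerivAt g (fderiv ℝ F xh (Pi.single i 1)) 0 := by
      have h2 := (hdiff (xh + (0:ℝ) • (Pi.single i (1:ℝ) : Fin n → ℝ))).hasFDerivAt.comp_hasDerivAt 0 hcurve
      simp only [zero_smul, add_zero] at h2
      have : g = F ∘ (fun t : ℝ => xh + t • (Pi.single i (1:ℝ) : Fin n → ℝ)) := by
        funext t; simp [hg, hgeq t, Function.comp]
      rw [this]
      exact h2
    have h0mem : (0:ℝ) ∈ {t : ℝ | xh + Pi.single i t ∈ Set.Icc ℓ u} := by
      show xh + Pi.single i (0:ℝ) ∈ Set.Icc ℓ u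
      simpa using hxh
    have hsmem : s ∈ {t : ℝ | xh + Pi.single i t ∈ Set.Icc ℓ u} := hmem
    have hslope := hconc.slope_le_of_hasDerivAt h0mem hsmem hs' hd
    rw [slope_def_field] at hslope
    have : (g s - g 0) / s ≤ fderiv ℝ F xh (Pi.single i 1) := by
      simpa using hslope
    have h3 := (div_le_iff₀ hs').mp this
    have hg0 : g 0 = F xh := by simp [hg]
    have hgs : g s = F (xh + Pi.single i s) := rfl
    linarith [h3, hg0.symm ▸ (by linarith [h3] : g s - g 0 ≤ fderiv ℝ F xh (Pi.single i 1) * s)]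

/-- Key gradient inequality: first-order estimator at `u` dominates `F u`. -/
lemma aux_key {n : ℕ} (ℓ u : Fin n → ℝ) (hlu : ∀ i, ℓ i < u i)
    (F : (Fin n → ℝ) → ℝ) (hdiff : Differentiable ℝ F)
    (hsub : ∀ x ∈ Set.Icc ℓ u, ∀ y ∈ Set.Icc ℓ u, F (x ⊔ y) + F (x ⊓ y) ≤ F x + F y)
    (hconc : ∀ (i : Fin n), ∀ x ∈ Set.Icc ℓ u,
      ConcaveOn ℝ {t : ℝ | x + Pi.single i t ∈ Set.Icc ℓ u}
        (fun t : ℝ => F (x + Pi.single i t)))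
    (xh : Fin n → ℝ) (hxh : xh ∈ Set.Icc ℓ u) :
    F u ≤ F xh + ∑ i : Fin n, fderiv ℝ F xh (Pi.single i 1) * (u i - xh i) := by
  set x : ℕ → Fin n → ℝ := fun k j => if (j : ℕ) < k then u j else xh j with hxdef
  have hx0 : x 0 = xh := funext fun j => if_neg (Nat.not_lt_zero _)
  have hxn : x n = u := funext fun j => if_pos j.isLt
  have hxmem : ∀ k, x k ∈ Set.Icc ℓ u := by
    intro k
    constructor <;> intro j <;> simp only [hxdef]
    · split
      · exact (hlu j).le
      · exact hxh.1 j
    · split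
      · exact le_refl _
      · exact hxh.2 j
  have step : ∀ i : Fin n,
      F (x ((i : ℕ) + 1)) - F (x (i : ℕ)) ≤
        fderiv ℝ F xh (Pi.single i 1) * (u i - xh i) := by
    intro i
    set k := (i : ℕ) with hk
    set a : Fin n → ℝ := xh + Pi.single i (u i - xh i) with ha
    have haj : ∀ j, a j = if j = i then u i else xh j := by
      intro j
      by_cases hji : j = i
      · subst hji; simp [ha]
      · simp [ha, Pi.single_eq_of_ne hji, hji]
    have hamem : a ∈ Set.Icc ℓ u := by
      constructor <;> intro j <;> rw [haj j]
      · split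
        · next h => subst h; exact (hlu j).le
        · exact hxh.1 j
      · split
        · next h => subst h; exact le_refl _
        · exact hxh.2 j
    have hne : ∀ j : Fin n, j ≠ i → ((j : ℕ) < k + 1 ↔ (j : ℕ) < k) := by
      intro j hji
      have : (j : ℕ) ≠ k := fun h => hji (Fin.ext h)
      omega
    have hsup : a ⊔ x k = x (k + 1) := by
      funext j
      by_cases hji : j = i
      · subst hji
        have h1 : x k j = xh j := if_neg (lt_irrefl _)
        have h2 : x (k+1) j = u j := if_pos (Nat.lt_succ_self _)
        simp only [Pi.sup_apply, haj j, if_pos rfl, h1, h2]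
        exact max_eq_left (hxh.2 j)
      · have h2 : x (k+1) j = x k j := by
          simp only [hxdef, hne j hji]
        simp only [Pi.sup_apply, haj j, if_neg hji, h2]
        have : xh j ≤ x k j := by
          simp only [hxdef]; split
          · exact hxh.2 j
          · exact le_refl _
        exact max_eq_right this
    have hinf : a ⊓ x k = xh := by
      funext j
      by_cases hji : j = i
      · subst hji
        have h1 : x k j = xh j := if_neg (lt_irrefl _)
        simp only [Pi.inf_apply, haj j, if_pos rfl, h1]
        exact min_eq_right (hxh.2 j)
      · simp only [Pi.inf_apply, haj j, if_neg hji]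
        have : xh j ≤ x k j := by
          simp only [hxdef]; split
          · exact hxh.2 j
          · exact le_refl _
        exact min_eq_left this
    have hsubm := hsub a hamem (x k) (hxmem k)
    rw [hsup, hinf] at hsubm
    have htan := aux_tangent ℓ u F hdiff i xh hxh (hconc i xh hxh)
      (u i - xh i) (by linarith [hxh.2 i]) (ha ▸ hamem)
    rw [← ha] at htan
    linarith
  have tele : F u - F xh = ∑ i : Fin n, (F (x ((i : ℕ) + 1)) - F (x (i : ℕ))) := by
    rw [Fin.sum_univ_eq_sum_range (fun k => F (x (k + 1)) - F (x k)) n,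
      Finset.sum_range_sub (fun k => F (x k)) n, hx0, hxn]
  have hsum : F u - F xh ≤ ∑ i : Fin n, fderiv ℝ F xh (Pi.single i 1) * (u i - xh i) := by
    rw [tele]
    exact Finset.sum_le_sum fun i _ => step i
  linarith

/-- the approximate concave envelope is exact at the corners.
For a non-decreasing, differentiable, DR-submodular `F` on the compact rectangle
`X = Icc ℓ u` (with `ℓ i < u i`), the minimum over support points `x̂ ∈ X` of the
approximate estimators
`F̆(x; x̂) = F x̂ + ∑ i (∂F/∂x_i)(x̂)·((u_i − x̂_i)/(u_i − ℓ_i))·(x_i − ℓ_i)`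
equals `F` at the corners: `F̆(ℓ) = F ℓ` and `F̆(u) = F u`.
(`xh` plays the role of `x̂`.) -/
theorem stmt_14 {n : ℕ} (hn : 1 ≤ n) (ℓ u : Fin n → ℝ) (hlu : ∀ i, ℓ i < u i)
    (F : (Fin n → ℝ) → ℝ) (hdiff : Differentiable ℝ F)
    (hsub : ∀ x ∈ Set.Icc ℓ u, ∀ y ∈ Set.Icc ℓ u, F (x ⊔ y) + F (x ⊓ y) ≤ F x + F y)
    (hconc : ∀ (i : Fin n), ∀ x ∈ Set.Icc ℓ u,
      ConcaveOn ℝ {t : ℝ | x + Pi.single i t ∈ Set.Icc ℓ u}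
        (fun t : ℝ => F (x + Pi.single i t)))
    (hmono : ∀ x ∈ Set.Icc ℓ u, ∀ y ∈ Set.Icc ℓ u, x ≤ y → F x ≤ F y) :
    sInf {v : ℝ | ∃ xh ∈ Set.Icc ℓ u,
        v = F xh + ∑ i : Fin n,
          fderiv ℝ F xh (Pi.single i 1) * ((u i - xh i) / (u i - ℓ i)) * (ℓ i - ℓ i)}
      = F ℓ
    ∧ sInf {v : ℝ | ∃ xh ∈ Set.Icc ℓ u,
        v = F xh + ∑ i : Fin n,
          fderiv ℝ F xh (Pi.single i 1) * ((u i - xh i) / (u i - ℓ i)) * (u i - ℓ i)}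
      = F u := by
  have hℓ : ℓ ∈ Set.Icc ℓ u := ⟨le_refl _, fun i => (hlu i).le⟩
  have hu : u ∈ Set.Icc ℓ u := ⟨fun i => (hlu i).le, le_refl _⟩
  constructor
  · have hmem : F ℓ ∈ {v : ℝ | ∃ xh ∈ Set.Icc ℓ u,
        v = F xh + ∑ i : Fin n,
          fderiv ℝ F xh (Pi.single i 1) * ((u i - xh i) / (u i - ℓ i)) * (ℓ i - ℓ i)} :=
      ⟨ℓ, hℓ, by simp⟩
    have hlb : ∀ v ∈ {v : ℝ | ∃ xh ∈ Set.Icc ℓ u,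
        v = F xh + ∑ i : Fin n,
          fderiv ℝ F xh (Pi.single i 1) * ((u i - xh i) / (u i - ℓ i)) * (ℓ i - ℓ i)},
        F ℓ ≤ v := by
      rintro v ⟨xh, hxh, rfl⟩
      simp only [sub_self, mul_zero, Finset.sum_const_zero, add_zero]
      exact hmono ℓ hℓ xh hxh hxh.1
    exact le_antisymm (csInf_le ⟨F ℓ, hlb⟩ hmem) (le_csInf ⟨F ℓ, hmem⟩ hlb)
  · have hmem : F u ∈ {v : ℝ | ∃ xh ∈ Set.Icc ℓ u,
        v = F xh + ∑ i : Fin n,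
          fderiv ℝ F xh (Pi.single i 1) * ((u i - xh i) / (u i - ℓ i)) * (u i - ℓ i)} :=
      ⟨u, hu, by simp⟩
    have hlb : ∀ v ∈ {v : ℝ | ∃ xh ∈ Set.Icc ℓ u,
        v = F xh + ∑ i : Fin n,
          fderiv ℝ F xh (Pi.single i 1) * ((u i - xh i) / (u i - ℓ i)) * (u i - ℓ i)},
        F u ≤ v := by
      rintro v ⟨xh, hxh, rfl⟩
      have hrw : ∀ i : Fin n,
          fderiv ℝ F xh (Pi.single i 1) * ((u i - xh i) / (u i - ℓ i)) * (u i - ℓ i)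
            = fderiv ℝ F xh (Pi.single i 1) * (u i - xh i) := by
        intro i
        have : u i - ℓ i ≠ 0 := sub_ne_zero.mpr (hlu i).ne'
        field_simp
      rw [Finset.sum_congr rfl fun i _ => hrw i]
      exact aux_key ℓ u hlu F hdiff hsub hconc xh hxh
    exact le_antisymm (csInf_le ⟨F u, hlb⟩ hmem) (le_csInf ⟨F u, hmem⟩ hlb)
end
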